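/- Let r ∈ ℝ. Let u : ℝ × ℝ² → ℝ² and ω : ℝ × ℝ² → ℝ be continuously differentiable, let G : ℝ² → ℝ be continuous, suppose div_x u(t,·) = 0 for every t, suppose there is a compact set K ⊂ ℝ² with supp ω(t,·) ⊆ K for all t, and suppose the damped transport equation ∂ₜω(t,x) + (u(t,·)·∇ω(t,·))(x) + r ω(t,x) = G(x) holds for all (t,x). Then the enstrophy E(t) = ∫_{ℝ²} ω(t,x)² dx is differentiable in t and satisfies the balance equation (1/2) E′(t) + r E(t) = ∫_{ℝ²} G(x) ω(t,x) dx for every t. -/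

import Mathlib

/-! Differentiating under the integral sign (legitimate since `ω(t,·)` is supported in a fixed
compact set and `∂ₜ(ω²)` is jointly continuous) and inserting the equation gives
`½ E'(t) + r E(t) = ∫ G ω - ∫ ω (u·∇ω)`. Since `div u = 0`, `ω (u·∇ω) = ½ div (ω² u)`, and
the integral of the divergence of a compactly supported `C¹` field vanishes (integrate by parts
against the constant `1`). -/

open MeasureTheory

/-- first partial derivative of a scalar function on ℝ². -/
noncomputable def pd1 (f : ℝ × ℝ → ℝ) (x : ℝ × ℝ) : ℝ := fderiv ℝ f x (1, 0)

/-- second partial derivative of a scalar function on ℝ². -/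
noncomputable def pd2 (f : ℝ × ℝ → ℝ) (x : ℝ × ℝ) : ℝ := fderiv ℝ f x (0, 1)

/-- divergence of a vector field: div v = ∂₁v¹ + ∂₂v². -/
noncomputable def divg (u : ℝ × ℝ → ℝ × ℝ) (x : ℝ × ℝ) : ℝ :=
  pd1 (fun y => (u y).1) x + pd2 (fun y => (u y).2) x

open Set Function

theorem HasCompactSupport.integrable_fderiv_apply {E : Type*} [NormedAddCommGroup E]
    [NormedSpace ℝ E] [MeasurableSpace E] [OpensMeasurableSpace E] {μ : Measure E}
    [IsFiniteMeasureOnCompacts μ] {g : E → ℝ} (hg : ContDiff ℝ 1 g) (hcs : HasCompactSupport g)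
    (v : E) : Integrable (fderiv ℝ g · v) μ :=
  ((hg.continuous_fderiv one_ne_zero).clm_apply continuous_const).integrable_of_hasCompactSupport
    (hcs.fderiv_apply ℝ v)

theorem HasCompactSupport.integral_fderiv_apply_eq_zero {E : Type*} [NormedAddCommGroup E]
    [NormedSpace ℝ E] [FiniteDimensional ℝ E] [MeasurableSpace E] [BorelSpace E] {μ : Measure E}
    [μ.IsAddHaarMeasure] {g : E → ℝ} (hg : ContDiff ℝ 1 g) (hcs : HasCompactSupport g) (v : E) :
    ∫ x, fderiv ℝ g x v ∂μ = 0 := by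
  simpa using integral_mul_fderiv_eq_neg_fderiv_mul_of_integrable (μ := μ)
    (f := fun _ => (1 : ℝ)) (g := g) (v := v) (by simp)
    (by simpa using hcs.integrable_fderiv_apply hg v)
    (by simpa using hg.continuous.integrable_of_hasCompactSupport hcs)
    (fun _ _ => differentiableAt_const _) (fun x _ => hg.differentiable one_ne_zero x)

theorem pd1_mul {f g : ℝ × ℝ → ℝ} {x : ℝ × ℝ} (hf : DifferentiableAt ℝ f x)
    (hg : DifferentiableAt ℝ g x) :
    pd1 (fun y => f y * g y) x = f x * pd1 g x + g x * pd1 f x := by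
  simp [pd1, fderiv_fun_mul hf hg]

theorem pd2_mul {f g : ℝ × ℝ → ℝ} {x : ℝ × ℝ} (hf : DifferentiableAt ℝ f x)
    (hg : DifferentiableAt ℝ g x) :
    pd2 (fun y => f y * g y) x = f x * pd2 g x + g x * pd2 f x := by
  simp [pd2, fderiv_fun_mul hf hg]

theorem divg_smul {f : ℝ × ℝ → ℝ} {v : ℝ × ℝ → ℝ × ℝ} {x : ℝ × ℝ}
    (hf : DifferentiableAt ℝ f x) (hv : DifferentiableAt ℝ v x) :
    divg (fun y => f y • v y) x = f x * divg v x + ((v x).1 * pd1 f x + (v x).2 * pd2 f x) := by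
  simp only [divg, Prod.smul_fst, Prod.smul_snd, smul_eq_mul, pd1_mul hf hv.fst,
    pd2_mul hf hv.snd]
  ring

theorem integral_divg_eq_zero {v : ℝ × ℝ → ℝ × ℝ} (hv : ContDiff ℝ 1 v)
    (hcs : HasCompactSupport v) : ∫ x, divg v x = 0 := by
  have hv₁ : HasCompactSupport (fun x => (v x).1) := hcs.comp_left rfl
  have hv₂ : HasCompactSupport (fun x => (v x).2) := hcs.comp_left rfl
  unfold divg pd1 pd2
  rw [integral_add (hv₁.integrable_fderiv_apply hv.fst _) (hv₂.integrable_fderiv_apply hv.snd _),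
    hv₁.integral_fderiv_apply_eq_zero hv.fst, hv₂.integral_fderiv_apply_eq_zero hv.snd, add_zero]

theorem integral_mul_transport_eq_zero {v : ℝ × ℝ → ℝ × ℝ} {w : ℝ × ℝ → ℝ}
    (hv : ContDiff ℝ 1 v) (hw : ContDiff ℝ 1 w) (hcs : HasCompactSupport w)
    (hdiv : ∀ x, divg v x = 0) :
    ∫ x, w x * ((v x).1 * pd1 w x + (v x).2 * pd2 w x) = 0 := by
  have hw' := hw.differentiable one_ne_zero
  have hdivg : ∀ x, divg (fun y => (w y * w y) • v y) x
      = 2 * (w x * ((v x).1 * pd1 w x + (v x).2 * pd2 w x)) := fun x => by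
    rw [divg_smul ((hw' x).fun_mul (hw' x)) (hv.differentiable one_ne_zero x),
      pd1_mul (hw' x) (hw' x), pd2_mul (hw' x) (hw' x), hdiv]
    ring
  have h : ∫ x, divg (fun y => (w y * w y) • v y) x = 0 :=
    integral_divg_eq_zero ((hw.mul hw).smul hv) hcs.mul_left.smul_right
  simp_rw [hdivg, integral_const_mul] at h
  simpa using h

theorem integral_mul_add_mul_integral_sq_eq_of_transport {v : ℝ × ℝ → ℝ × ℝ}
    {w D g : ℝ × ℝ → ℝ} {r : ℝ} (hv : ContDiff ℝ 1 v) (hw : ContDiff ℝ 1 w)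
    (hcs : HasCompactSupport w) (hD : Continuous D) (hg : Continuous g)
    (hdiv : ∀ x, divg v x = 0)
    (heq : ∀ x, D x + ((v x).1 * pd1 w x + (v x).2 * pd2 w x) + r * w x = g x) :
    (∫ x, D x * w x) + r * ∫ x, w x ^ 2 = ∫ x, g x * w x := by
  have hint : ∀ f : ℝ × ℝ → ℝ, Continuous f → Integrable fun x => f x * w x :=
    fun f hf => (hf.mul hw.continuous).integrable_of_hasCompactSupport hcs.mul_left
  have hdiff : Integrable fun x => g x * w x - D x * w x := (hint g hg).sub (hint D hD)
  have hsq : Integrable fun x => r * w x ^ 2 := by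
    simpa only [pow_two, mul_assoc] using (hint w hw.continuous).const_mul r
  have htransport := integral_mul_transport_eq_zero hv hw hcs hdiv
  have hpointwise : ∀ x, w x * ((v x).1 * pd1 w x + (v x).2 * pd2 w x)
      = g x * w x - D x * w x - r * w x ^ 2 := fun x => by
    rw [← heq x]
    ring
  simp_rw [hpointwise] at htransport
  rw [integral_sub hdiff hsq, integral_sub (hint g hg) (hint D hD), integral_const_mul]
    at htransport
  linarith

theorem DifferentiableAt.hasDerivAt_comp_prodMk_left {E F : Type*} [NormedAddCommGroup E]
    [NormedSpace ℝ E] [NormedAddCommGroup F] [NormedSpace ℝ F] {f : ℝ × E → F} {s : ℝ} {x : E}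
    (hf : DifferentiableAt ℝ f (s, x)) :
    HasDerivAt (fun s => f (s, x)) (fderiv ℝ f (s, x) (1, 0)) s :=
  hf.hasFDerivAt.comp_hasDerivAt s ((hasDerivAt_id s).prodMk (hasDerivAt_const s x))

theorem hasDerivAt_integral_of_support_subset {X : Type*} [TopologicalSpace X] [T2Space X]
    [MeasurableSpace X] [OpensMeasurableSpace X] {μ : Measure X} [IsFiniteMeasureOnCompacts μ]
    {F F' : ℝ → X → ℝ} {K : Set X} (hK : IsCompact K)
    (hsupp : ∀ s, support (F s) ⊆ K) (hF : Continuous (uncurry F))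
    (hF' : Continuous (uncurry F')) (hderiv : ∀ s x, HasDerivAt (F · x) (F' s x) s) (t : ℝ) :
    HasDerivAt (fun s => ∫ x, F s x ∂μ) (∫ x, F' t x ∂μ) t := by
  have hF'_zero : ∀ s, ∀ x ∉ K, F' s x = 0 := fun s x hx => by
    have hFx : (F · x) = fun _ => 0 := funext fun s' => notMem_support.mp fun h => hx (hsupp s' h)
    exact (hderiv s x).unique (hFx ▸ hasDerivAt_const s 0)
  obtain ⟨C, hC⟩ := (isCompact_Icc (a := t - 1) (b := t + 1)).prod hK
    |>.exists_bound_of_continuousOn hF'.continuousOn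
  have h_bound : ∀ x, ∀ s ∈ Metric.ball t 1, ‖F' s x‖ ≤ K.indicator (fun _ => C) x := by
    intro x s hs
    by_cases hx : x ∈ K
    · rw [indicator_of_mem hx]
      rw [Metric.mem_ball, Real.dist_eq, abs_lt] at hs
      exact hC (s, x) ⟨⟨by linarith, by linarith⟩, hx⟩
    · rw [indicator_of_notMem hx, hF'_zero s x hx, norm_zero]
  refine (hasDerivAt_integral_of_dominated_loc_of_deriv_le (Metric.ball_mem_nhds t one_pos)
    (.of_forall fun s => (hF.uncurry_left s).aestronglyMeasurable)
    ((hF.uncurry_left t).integrable_of_hasCompactSupport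
      (.of_support_subset_isCompact hK (hsupp t)))
    (hF'.uncurry_left t).aestronglyMeasurable (.of_forall h_bound)
    ((integrable_indicator_iff hK.measurableSet).2 (integrableOn_const hK.measure_lt_top.ne))
    (.of_forall fun x s _ => hderiv s x)).2

theorem hasDerivAt_integral_sq_of_support_subset {E : Type*} [NormedAddCommGroup E]
    [NormedSpace ℝ E] [MeasurableSpace E] [OpensMeasurableSpace E] {μ : Measure E}
    [IsFiniteMeasureOnCompacts μ] {ω : ℝ × E → ℝ} (hω : ContDiff ℝ 1 ω) {K : Set E}
    (hK : IsCompact K) (hsupp : ∀ s, support (fun x => ω (s, x)) ⊆ K) (t : ℝ) :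
    HasDerivAt (fun s => ∫ x, ω (s, x) ^ 2 ∂μ)
      (∫ x, 2 * (fderiv ℝ ω (t, x) (1, 0) * ω (t, x)) ∂μ) t := by
  refine hasDerivAt_integral_of_support_subset (F := fun s x => ω (s, x) ^ 2)
    (F' := fun s x => 2 * (fderiv ℝ ω (s, x) (1, 0) * ω (s, x))) hK
    (fun s => (support_pow _ two_ne_zero).subset.trans (hsupp s)) (by fun_prop) (by fun_prop)
    (fun s x => ?_) t
  exact ((hω.differentiable one_ne_zero _).hasDerivAt_comp_prodMk_left.fun_pow 2).congr_deriv
    (by simp; ring)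

theorem enstrophy_balance (r : ℝ) (u : ℝ × (ℝ × ℝ) → ℝ × ℝ) (ω : ℝ × (ℝ × ℝ) → ℝ)
    (G : ℝ × ℝ → ℝ)
    (hu : ContDiff ℝ 1 u) (hω : ContDiff ℝ 1 ω) (hG : Continuous G)
    (hdiv : ∀ t : ℝ, ∀ x : ℝ × ℝ, divg (fun y => u (t, y)) x = 0)
    (hsupp : ∃ K : Set (ℝ × ℝ), IsCompact K ∧
      ∀ t : ℝ, Function.support (fun x => ω (t, x)) ⊆ K)
    (heq : ∀ t : ℝ, ∀ x : ℝ × ℝ,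
      deriv (fun s => ω (s, x)) t
        + ((u (t, x)).1 * pd1 (fun y => ω (t, y)) x
            + (u (t, x)).2 * pd2 (fun y => ω (t, y)) x)
        + r * ω (t, x) = G x) :
    ∀ t : ℝ,
      DifferentiableAt ℝ (fun s => ∫ x : ℝ × ℝ, ω (s, x) ^ 2) t ∧
      (1 / 2) * deriv (fun s => ∫ x : ℝ × ℝ, ω (s, x) ^ 2) t
          + r * ∫ x : ℝ × ℝ, ω (t, x) ^ 2
        = ∫ x : ℝ × ℝ, G x * ω (t, x) := by
  obtain ⟨K, hK, hKsupp⟩ := hsupp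
  intro t
  have hE := hasDerivAt_integral_sq_of_support_subset (μ := volume) hω hK hKsupp t
  refine ⟨hE.differentiableAt, ?_⟩
  have hω_t : ∀ x, HasDerivAt (fun s => ω (s, x)) (fderiv ℝ ω (t, x) (1, 0)) t :=
    fun x => (hω.differentiable one_ne_zero _).hasDerivAt_comp_prodMk_left
  have hbalance := integral_mul_add_mul_integral_sq_eq_of_transport (v := fun x => u (t, x))
    (w := fun x => ω (t, x)) (D := fun x => fderiv ℝ ω (t, x) (1, 0))
    (hu.comp (contDiff_const.prodMk contDiff_id)) (hω.comp (contDiff_const.prodMk contDiff_id))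
    (.of_support_subset_isCompact hK (hKsupp t))
    (((hω.continuous_fderiv one_ne_zero).clm_apply continuous_const).comp
      (continuous_const.prodMk continuous_id)) hG (hdiv t)
    fun x => (hω_t x).deriv ▸ heq t x
  rw [hE.deriv, integral_const_mul, ← hbalance]
  ring
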